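/- arXiv:2212.12821 — 2 statements merged into one kernel-verified Lean document; each statement's English description precedes it below -/
import Mathlib

section
/- For 1<p<∞ and t ≥ 0, one has V_{p'}(V_p'(t)) ≤ C(p) V_p(t), where V_p'(t) = p t (1+t^2)^{(p-2)/2} is the derivative of V_p. -/
noncomputable def Vp (p t : ℝ) : ℝ := (1 + t ^ 2) ^ (p / 2) - 1

/-!
For `s > 0` and `x ≥ 0`, `(1 + x) ^ s - 1` is comparable, up to the factors `min s 1` and
`max s 1`, to `x / (1 + x) * (1 + x) ^ s`; with `w = (1 + x)⁻¹` this is Bernoulli's inequality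
for `w ^ s`. Apply it to `Vp p t` (with `x = t ^ 2`) and to `Vp p' (Vp' t)` (with
`x = A = |Vp' t| ^ 2 = p ^ 2 t ^ 2 (1 + t ^ 2) ^ (p - 2)`). Then `A / (1 + A) ≲ t ^ 2 / (1 + t ^ 2)`
(compare `A` with `t ^ 2` for `t ≤ 1`, bound the ratio by `1` otherwise), and
`1 + A ≲ (1 + t ^ 2) ^ (p - 1)`, whose `p' / 2`-th power is `(1 + t ^ 2) ^ (p / 2)`.
-/

open Real

section Bernoulli

variable {s w : ℝ}

lemma one_sub_rpow_le_max_mul (hw₀ : 0 < w) (hw₁ : w ≤ 1) :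
    1 - w ^ s ≤ max s 1 * (1 - w) := by
  rcases le_total 1 s with h1 | h1
  · have := one_add_mul_self_le_rpow_one_add (s := w - 1) (by linarith) h1
    rw [max_eq_left h1]
    simp only [add_sub_cancel] at this
    linarith
  · have : w ≤ w ^ s := by
      simpa using rpow_le_rpow_of_exponent_ge hw₀ hw₁ h1
    rw [max_eq_right h1]
    linarith

lemma min_mul_le_one_sub_rpow (hs : 0 ≤ s) (hw₀ : 0 < w) (hw₁ : w ≤ 1) :
    min s 1 * (1 - w) ≤ 1 - w ^ s := by
  rcases le_total 1 s with h1 | h1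
  · have : w ^ s ≤ w := by
      simpa using rpow_le_rpow_of_exponent_ge hw₀ hw₁ h1
    rw [min_eq_right h1]
    linarith
  · have := rpow_one_add_le_one_add_mul_self (s := w - 1) (by linarith) hs h1
    rw [min_eq_left h1]
    simp only [add_sub_cancel] at this
    linarith

end Bernoulli

section OneAddRpow

variable {s x : ℝ}

lemma one_add_rpow_sub_one_eq (hx : 0 ≤ x) :
    (1 + x) ^ s - 1 = (1 - (1 + x)⁻¹ ^ s) * (1 + x) ^ s := by
  have hpos : 0 < (1 + x) ^ s := rpow_pos_of_pos (by linarith) s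
  rw [inv_rpow (by linarith), sub_mul, inv_mul_cancel₀ hpos.ne', one_mul]

lemma div_one_add_eq_one_sub_inv (hx : 0 ≤ x) : x / (1 + x) = 1 - (1 + x)⁻¹ := by
  field_simp
  ring

lemma one_add_rpow_sub_one_le (hx : 0 ≤ x) :
    (1 + x) ^ s - 1 ≤ max s 1 * (x / (1 + x)) * (1 + x) ^ s := by
  rw [one_add_rpow_sub_one_eq hx, div_one_add_eq_one_sub_inv hx]
  gcongr
  exact one_sub_rpow_le_max_mul (by positivity) (inv_le_one_of_one_le₀ (by linarith))

lemma le_one_add_rpow_sub_one (hs : 0 ≤ s) (hx : 0 ≤ x) :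
    min s 1 * (x / (1 + x)) * (1 + x) ^ s ≤ (1 + x) ^ s - 1 := by
  rw [one_add_rpow_sub_one_eq hx, div_one_add_eq_one_sub_inv hx]
  gcongr
  exact min_mul_le_one_sub_rpow hs (by positivity) (inv_le_one_of_one_le₀ (by linarith))

end OneAddRpow

lemma hasDerivAt_Vp (p t : ℝ) :
    HasDerivAt (Vp p) (p * t * (1 + t ^ 2) ^ ((p - 2) / 2)) t := by
  have hd : HasDerivAt (fun s : ℝ => 1 + s ^ 2) (2 * t) t := by
    simpa using (hasDerivAt_pow 2 t).const_add 1
  refine ((hd.rpow_const (p := p / 2) (Or.inl (by positivity))).sub_const 1).congr_deriv ?_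
  rw [show p / 2 - 1 = (p - 2) / 2 by ring]
  ring

lemma sq_deriv_Vp (p t : ℝ) :
    (p * t * (1 + t ^ 2) ^ ((p - 2) / 2)) ^ 2 = p ^ 2 * t ^ 2 * (1 + t ^ 2) ^ (p - 2) := by
  rw [mul_pow, mul_pow, ← rpow_mul_natCast (by positivity)]
  norm_num

section

variable {p : ℝ} (t : ℝ)

lemma sq_deriv_Vp_eq_div : p ^ 2 * t ^ 2 * (1 + t ^ 2) ^ (p - 2) =
    p ^ 2 * (1 + t ^ 2) ^ (p - 1) * (t ^ 2 / (1 + t ^ 2)) := by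
  rw [show p - 2 = p - 1 - 1 by ring, rpow_sub_one (by positivity)]
  ring

lemma one_add_sq_deriv_Vp_le (hp : 1 ≤ p) :
    1 + p ^ 2 * t ^ 2 * (1 + t ^ 2) ^ (p - 2) ≤ (1 + p ^ 2) * (1 + t ^ 2) ^ (p - 1) := by
  have h1 : 1 ≤ (1 + t ^ 2) ^ (p - 1) := one_le_rpow (by nlinarith) (by linarith)
  have h2 : t ^ 2 / (1 + t ^ 2) ≤ 1 := div_le_one_of_le₀ (by linarith) (by positivity)
  rw [sq_deriv_Vp_eq_div]
  nlinarith [show 0 ≤ p ^ 2 * (1 + t ^ 2) ^ (p - 1) by positivity]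

lemma sq_deriv_Vp_div_le (hp : 1 ≤ p) :
    p ^ 2 * t ^ 2 * (1 + t ^ 2) ^ (p - 2) / (1 + p ^ 2 * t ^ 2 * (1 + t ^ 2) ^ (p - 2)) ≤
      (p ^ 2 * 2 ^ (p - 1) + 2) * (t ^ 2 / (1 + t ^ 2)) := by
  set A := p ^ 2 * t ^ 2 * (1 + t ^ 2) ^ (p - 2) with hA_def
  have hA : 0 ≤ A := by positivity
  have hratio : 0 ≤ t ^ 2 / (1 + t ^ 2) := by positivity
  rcases le_total (t ^ 2) 1 with ht | ht
  · have hpow : (1 + t ^ 2) ^ (p - 1) ≤ 2 ^ (p - 1) :=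
      rpow_le_rpow (by positivity) (by linarith) (by linarith)
    calc A / (1 + A) ≤ A := div_le_self hA (by linarith)
      _ ≤ p ^ 2 * 2 ^ (p - 1) * (t ^ 2 / (1 + t ^ 2)) := by
          rw [hA_def, sq_deriv_Vp_eq_div]; gcongr
      _ ≤ _ := by nlinarith
  · have : 1 ≤ 2 * (t ^ 2 / (1 + t ^ 2)) := by
      rw [mul_div_assoc', le_div_iff₀ (by positivity)]; linarith
    calc A / (1 + A) ≤ 1 := div_le_one_of_le₀ (by linarith) (by linarith)
      _ ≤ _ := by nlinarith [show 0 ≤ p ^ 2 * 2 ^ (p - 1) by positivity]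

end

lemma one_add_sq_deriv_Vp_rpow_conj_le {p : ℝ} (hp : 1 < p) (t : ℝ) :
    (1 + p ^ 2 * t ^ 2 * (1 + t ^ 2) ^ (p - 2)) ^ (p / (p - 1) / 2) ≤
      (1 + p ^ 2) ^ (p / (p - 1) / 2) * (1 + t ^ 2) ^ (p / 2) := by
  have hexp : (p - 1) * (p / (p - 1) / 2) = p / 2 := by
    field_simp [(by linarith : p - 1 ≠ 0)]
  calc (1 + p ^ 2 * t ^ 2 * (1 + t ^ 2) ^ (p - 2)) ^ (p / (p - 1) / 2)
      ≤ ((1 + p ^ 2) * (1 + t ^ 2) ^ (p - 1)) ^ (p / (p - 1) / 2) := by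
        gcongr
        exact one_add_sq_deriv_Vp_le t hp.le
    _ = (1 + p ^ 2) ^ (p / (p - 1) / 2) * (1 + t ^ 2) ^ (p / 2) := by
        rw [mul_rpow (by positivity) (by positivity), ← rpow_mul (by positivity), hexp]

theorem stmt_4 (p : ℝ) (hp : 1 < p) :
    (∀ t : ℝ, HasDerivAt (fun s : ℝ => (1 + s ^ 2) ^ (p / 2) - 1)
      (p * t * (1 + t ^ 2) ^ ((p - 2) / 2)) t) ∧
    ∃ C : ℝ, 0 < C ∧ ∀ t : ℝ, 0 ≤ t →
      Vp (p / (p - 1)) (p * t * (1 + t ^ 2) ^ ((p - 2) / 2)) ≤ C * Vp p t := by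
  refine ⟨hasDerivAt_Vp p, ?_⟩
  set r := p / (p - 1) / 2
  set K := p ^ 2 * 2 ^ (p - 1) + 2
  have hm : 0 < min (p / 2) 1 := lt_min (by linarith) one_pos
  refine ⟨max r 1 * K * (1 + p ^ 2) ^ r / min (p / 2) 1, by positivity, fun t _ => ?_⟩
  set A := p ^ 2 * t ^ 2 * (1 + t ^ 2) ^ (p - 2)
  have hA : 0 ≤ A := by positivity
  calc Vp (p / (p - 1)) (p * t * (1 + t ^ 2) ^ ((p - 2) / 2))
      = (1 + A) ^ r - 1 := by rw [Vp, sq_deriv_Vp]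
    _ ≤ max r 1 * (A / (1 + A)) * (1 + A) ^ r := one_add_rpow_sub_one_le hA
    _ ≤ max r 1 * (K * (t ^ 2 / (1 + t ^ 2))) * ((1 + p ^ 2) ^ r * (1 + t ^ 2) ^ (p / 2)) := by
        gcongr
        · exact sq_deriv_Vp_div_le t hp.le
        · exact one_add_sq_deriv_Vp_rpow_conj_le hp t
    _ = max r 1 * K * (1 + p ^ 2) ^ r / min (p / 2) 1 *
          (min (p / 2) 1 * (t ^ 2 / (1 + t ^ 2)) * (1 + t ^ 2) ^ (p / 2)) := by
        field_simp
    _ ≤ max r 1 * K * (1 + p ^ 2) ^ r / min (p / 2) 1 * Vp p t := by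
        gcongr
        exact le_one_add_rpow_sub_one (by linarith) (by positivity)
end

section
/- For 1 < p < 2 define the truncation T_p : ℝ^N → ℝ^N by T_p(z) = z if |z| ≤ 1 and T_p(z) = |z|^{p-2} z if |z| > 1. Then there are constants c_1(p), c_2(p) > 0 such that ⟨T_p(z), z⟩ ≥ c_1 V_p(z) and V_{p'}(T_p(z)) ≤ c_2 V_p(z) for all z ∈ ℝ^N, where p' = p/(p-1). -/
open scoped RealInnerProductSpace

/-- Truncation operator `T_p` on `ℝ^N` for `1 < p < 2`. -/
noncomputable def Tp {N : ℕ} (p : ℝ) (z : EuclideanSpace ℝ (Fin N)) :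
    EuclideanSpace ℝ (Fin N) :=
  if ‖z‖ ≤ 1 then z else ‖z‖ ^ (p - 2) • z

/-!
Writing `t = |z|`, one has `⟪T_p z, z⟫ = min (t², t^p)`, and `V_p(t)` is comparable to the same
quantity: it behaves like `t²` for `t ≤ 1` (convexity/concavity chords of `s ↦ (1 + s)^(p/2)` on
`[0, 1]`) and like `t^p` for `t ≥ 1`. On the other side `|T_p z| = min (t, t^(p-1))`, and
`(t^(p-1))^p' = t^p`, so `V_p'(|T_p z|) ≲ min (t², t^p)` as well.
-/

lemma sq_rpow_half {t : ℝ} (ht : 0 ≤ t) (p : ℝ) : (t ^ 2) ^ (p / 2) = t ^ p := by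
  rw [← Real.rpow_natCast_mul ht, Nat.cast_ofNat, mul_div_cancel₀ p two_ne_zero]

section Vp

variable {p t : ℝ}

lemma two_rpow_half_sub_one_pos (hp : 0 < p) : 0 < (2 : ℝ) ^ (p / 2) - 1 :=
  sub_pos.mpr (Real.one_lt_rpow one_lt_two (by positivity))

lemma Vp_nonneg (hp : 0 ≤ p) (t : ℝ) : 0 ≤ Vp p t := by
  have : (1 : ℝ) ≤ (1 + t ^ 2) ^ (p / 2) :=
    Real.one_le_rpow (le_add_of_nonneg_right (sq_nonneg t)) (by positivity)
  unfold Vp; linarith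

lemma Vp_le_sq (hp : p ≤ 2) (t : ℝ) : Vp p t ≤ t ^ 2 := by
  have : (1 + t ^ 2) ^ (p / 2) ≤ (1 + t ^ 2) ^ (1 : ℝ) :=
    Real.rpow_le_rpow_of_exponent_le (le_add_of_nonneg_right (sq_nonneg t)) (by linarith)
  rw [Real.rpow_one] at this
  unfold Vp; linarith

lemma Vp_le_rpow (hp0 : 0 ≤ p) (hp2 : p ≤ 2) (ht : 0 ≤ t) : Vp p t ≤ t ^ p := by
  have := Real.rpow_add_le_add_rpow zero_le_one (sq_nonneg t) (by positivity : 0 ≤ p / 2)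
    (by linarith)
  rw [Real.one_rpow, sq_rpow_half ht] at this
  unfold Vp; linarith

lemma rpow_sub_one_le_Vp (hp : 0 ≤ p) (ht : 0 ≤ t) : t ^ p - 1 ≤ Vp p t := by
  have := Real.rpow_le_rpow (sq_nonneg t) (le_add_of_nonneg_left zero_le_one)
    (by positivity : 0 ≤ p / 2)
  rw [sq_rpow_half ht] at this
  unfold Vp; linarith

lemma two_rpow_sub_one_le_Vp (hp : 0 ≤ p) (ht : 1 ≤ t) : 2 ^ (p / 2) - 1 ≤ Vp p t := by
  have : (2 : ℝ) ^ (p / 2) ≤ (1 + t ^ 2) ^ (p / 2) :=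
    Real.rpow_le_rpow zero_le_two (by nlinarith) (by positivity)
  unfold Vp; linarith

lemma Vp_le_two_rpow_mul_rpow (hp : 0 ≤ p) (ht : 1 ≤ t) : Vp p t ≤ 2 ^ (p / 2) * t ^ p := by
  have : (1 + t ^ 2) ^ (p / 2) ≤ (2 * t ^ 2) ^ (p / 2) :=
    Real.rpow_le_rpow (by positivity) (by nlinarith) (by positivity)
  rw [Real.mul_rpow zero_le_two (sq_nonneg t), sq_rpow_half (by linarith)] at this
  unfold Vp; linarith

lemma mul_sq_le_Vp (hp0 : 0 ≤ p) (hp2 : p ≤ 2) (ht : t ^ 2 ≤ 1) :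
    (2 ^ (p / 2) - 1) * t ^ 2 ≤ Vp p t := by
  have := (Real.concaveOn_rpow (by positivity : 0 ≤ p / 2) (by linarith)).2
    (Set.mem_Ici.mpr zero_le_one) (Set.mem_Ici.mpr zero_le_two)
    (sub_nonneg.mpr ht) (sq_nonneg t) (sub_add_cancel 1 (t ^ 2))
  simp only [smul_eq_mul, Real.one_rpow] at this
  rw [show (1 - t ^ 2) * 1 + t ^ 2 * 2 = 1 + t ^ 2 by ring] at this
  unfold Vp; linarith

lemma Vp_le_mul_sq (hp : 2 ≤ p) (ht : t ^ 2 ≤ 1) :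
    Vp p t ≤ (2 ^ (p / 2) - 1) * t ^ 2 := by
  have := (convexOn_rpow (by linarith : 1 ≤ p / 2)).2
    (Set.mem_Ici.mpr zero_le_one) (Set.mem_Ici.mpr zero_le_two)
    (sub_nonneg.mpr ht) (sq_nonneg t) (sub_add_cancel 1 (t ^ 2))
  simp only [smul_eq_mul, Real.one_rpow] at this
  rw [show (1 - t ^ 2) * 1 + t ^ 2 * 2 = 1 + t ^ 2 by ring] at this
  unfold Vp; linarith

end Vp

section Tp

variable {N : ℕ} {p : ℝ} {z : EuclideanSpace ℝ (Fin N)}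

lemma Tp_of_norm_le_one (hz : ‖z‖ ≤ 1) : Tp p z = z := if_pos hz

lemma Tp_of_one_lt_norm (hz : 1 < ‖z‖) : Tp p z = ‖z‖ ^ (p - 2) • z := if_neg hz.not_ge

lemma inner_Tp_self_of_one_lt_norm (hz : 1 < ‖z‖) : ⟪Tp p z, z⟫ = ‖z‖ ^ p := by
  rw [Tp_of_one_lt_norm hz, real_inner_smul_left, real_inner_self_eq_norm_sq,
    ← Real.rpow_natCast, ← Real.rpow_add (by linarith)]
  norm_num

lemma norm_Tp_of_one_lt_norm (hz : 1 < ‖z‖) : ‖Tp p z‖ = ‖z‖ ^ (p - 1) := by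
  rw [Tp_of_one_lt_norm hz, norm_smul, Real.norm_of_nonneg (by positivity),
    ← Real.rpow_add_one (by linarith)]
  ring_nf

theorem Vp_le_inner_Tp_self (hp0 : 0 ≤ p) (hp2 : p ≤ 2) (z : EuclideanSpace ℝ (Fin N)) :
    Vp p ‖z‖ ≤ ⟪Tp p z, z⟫ := by
  rcases le_or_gt ‖z‖ 1 with hz | hz
  · rw [Tp_of_norm_le_one hz, real_inner_self_eq_norm_sq]
    exact Vp_le_sq hp2 _
  · rw [inner_Tp_self_of_one_lt_norm hz]
    exact Vp_le_rpow hp0 hp2 (norm_nonneg z)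

theorem inner_Tp_self_le_mul_Vp (hp0 : 0 < p) (hp2 : p ≤ 2) (z : EuclideanSpace ℝ (Fin N)) :
    ⟪Tp p z, z⟫ ≤ (1 + (2 ^ (p / 2) - 1)⁻¹) * Vp p ‖z‖ := by
  have hA := two_rpow_half_sub_one_pos hp0
  have hV := Vp_nonneg hp0.le ‖z‖
  rcases le_or_gt ‖z‖ 1 with hz | hz
  · rw [Tp_of_norm_le_one hz, real_inner_self_eq_norm_sq]
    have hsq : ‖z‖ ^ 2 ≤ (2 ^ (p / 2) - 1)⁻¹ * Vp p ‖z‖ := by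
      rw [inv_mul_eq_div, le_div_iff₀ hA, mul_comm]
      exact mul_sq_le_Vp hp0.le hp2 (pow_le_one₀ (norm_nonneg z) hz)
    linarith
  · rw [inner_Tp_self_of_one_lt_norm hz]
    have hone : 1 ≤ (2 ^ (p / 2) - 1)⁻¹ * Vp p ‖z‖ := by
      rw [inv_mul_eq_div, one_le_div hA]
      exact two_rpow_sub_one_le_Vp hp0.le hz.le
    linarith [rpow_sub_one_le_Vp hp0.le (norm_nonneg z)]

theorem Vp_conj_norm_Tp_le (hp1 : 1 < p) (hp2 : p ≤ 2) (z : EuclideanSpace ℝ (Fin N)) :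
    Vp (p / (p - 1)) ‖Tp p z‖ ≤ 2 ^ (p / (p - 1) / 2) * ⟪Tp p z, z⟫ := by
  have hq : 2 ≤ p / (p - 1) := by
    rw [le_div_iff₀ (by linarith)]; linarith
  rcases le_or_gt ‖z‖ 1 with hz | hz
  · rw [Tp_of_norm_le_one hz, real_inner_self_eq_norm_sq]
    have := Vp_le_mul_sq hq (pow_le_one₀ (norm_nonneg z) hz)
    nlinarith [sq_nonneg ‖z‖]
  · rw [norm_Tp_of_one_lt_norm hz, inner_Tp_self_of_one_lt_norm hz]
    have hconj : (‖z‖ ^ (p - 1)) ^ (p / (p - 1)) = ‖z‖ ^ p := by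
      rw [← Real.rpow_mul (norm_nonneg z), mul_div_cancel₀ _ (by linarith)]
    exact hconj ▸ Vp_le_two_rpow_mul_rpow (by positivity)
      (Real.one_le_rpow hz.le (by linarith))

end Tp

theorem stmt_14 (N : ℕ) (p : ℝ) (hp1 : 1 < p) (hp2 : p < 2) :
    ∃ c₁ c₂ : ℝ, 0 < c₁ ∧ 0 < c₂ ∧
      ∀ z : EuclideanSpace ℝ (Fin N),
        c₁ * Vp p ‖z‖ ≤ ⟪Tp p z, z⟫ ∧
        Vp (p / (p - 1)) ‖Tp p z‖ ≤ c₂ * Vp p ‖z‖ := by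
  have hA := two_rpow_half_sub_one_pos (by linarith : 0 < p)
  refine ⟨1, 2 ^ (p / (p - 1) / 2) * (1 + (2 ^ (p / 2) - 1)⁻¹), one_pos, by positivity,
    fun z => ⟨by simpa using Vp_le_inner_Tp_self (by linarith) hp2.le z, ?_⟩⟩
  calc Vp (p / (p - 1)) ‖Tp p z‖ ≤ 2 ^ (p / (p - 1) / 2) * ⟪Tp p z, z⟫ :=
        Vp_conj_norm_Tp_le hp1 hp2.le z
    _ ≤ 2 ^ (p / (p - 1) / 2) * ((1 + (2 ^ (p / 2) - 1)⁻¹) * Vp p ‖z‖) := by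
        gcongr
        exact inner_Tp_self_le_mul_Vp (by linarith) hp2.le z
    _ = 2 ^ (p / (p - 1) / 2) * (1 + (2 ^ (p / 2) - 1)⁻¹) * Vp p ‖z‖ := by ring
end
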